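/- arXiv:1606.08184 — 6 statements merged into one kernel-verified Lean document; each statement's English description precedes it below -/
import Mathlib

section
/- For any two connected simple graphs G and H, the distinguishing number of the lexicographic product satisfies D(H) ≤ D(G[H]). -/
open SimpleGraph

/-- The lexicographic product of two simple graphs. -/
def lexProd {V W : Type*} (G : SimpleGraph V) (H : SimpleGraph W) :
    SimpleGraph (V × W) where
  Adj p q := G.Adj p.1 q.1 ∨ (p.1 = q.1 ∧ H.Adj p.2 q.2)
  symm := by
    constructor
    rintro p q (h | ⟨h1, h2⟩)
    · exact Or.inl h.symm
    · exact Or.inr ⟨h1.symm, h2.symm⟩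
  loopless := by
    constructor
    rintro p (h | ⟨_, h⟩)
    · exact G.irrefl h
    · exact H.irrefl h

/-- The distinguishing number: the least `d` such that there is a vertex labeling with `d`
labels preserved only by the identity automorphism. -/
noncomputable def distinguishingNumber {V : Type*} (G : SimpleGraph V) : ℕ :=
  sInf {d : ℕ | ∃ φ : V → Fin d,
    ∀ σ : G ≃g G, (∀ v, φ (σ v) = φ v) → ∀ v, σ v = v}

/-- The distinguishing index: the least `d` such that there is an edge labeling with `d`
labels preserved only by the identity automorphism. -/
noncomputable def distinguishingIndex {V : Type*} (G : SimpleGraph V) : ℕ :=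
  sInf {d : ℕ | ∃ ψ : G.edgeSet → Fin d,
    ∀ σ : G ≃g G, (∀ e, ψ (σ.mapEdgeSet e) = ψ e) → ∀ v, σ v = v}

/-- Every automorphism of `G[H]` is of wreath form, i.e. `Aut(G[H]) = Aut(G)[Aut(H)]`. -/
def wreathForm {V W : Type*} (G : SimpleGraph V) (H : SimpleGraph W) : Prop :=
  ∀ f : lexProd G H ≃g lexProd G H,
    ∃ (α : G ≃g G) (β : V → (H ≃g H)),
      ∀ p : V × W, f p = (α p.1, β (α p.1) p.2)

/-! An automorphism `σ` of `H` extends to an automorphism of `G[H]` acting as `σ` on a single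
copy of `H` and trivially elsewhere. Hence a distinguishing labeling of `G[H]` restricts to a
distinguishing labeling of any copy of `H`, which exists as soon as `G` has a vertex. -/

def IsDistinguishing {V α : Type*} (G : SimpleGraph V) (φ : V → α) : Prop :=
  ∀ σ : G ≃g G, (∀ v, φ (σ v) = φ v) → ∀ v, σ v = v

theorem isDistinguishing_of_injective {V α : Type*} (G : SimpleGraph V) {φ : V → α}
    (hφ : Function.Injective φ) : IsDistinguishing G φ :=
  fun _ h v ↦ hφ (h v)

theorem distinguishingNumber_le {V : Type*} {G : SimpleGraph V} {d : ℕ} {φ : V → Fin d}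
    (hφ : IsDistinguishing G φ) : distinguishingNumber G ≤ d :=
  Nat.sInf_le ⟨φ, hφ⟩

theorem exists_isDistinguishing_distinguishingNumber {V : Type*} [Finite V]
    (G : SimpleGraph V) : ∃ φ : V → Fin (distinguishingNumber G), IsDistinguishing G φ :=
  Nat.sInf_mem (s := {d | ∃ φ : V → Fin d, IsDistinguishing G φ})
    ⟨Nat.card V, Finite.equivFin V, isDistinguishing_of_injective G (Finite.equivFin V).injective⟩

def lexProdFiberIso {V W : Type*} [DecidableEq V] (G : SimpleGraph V) {H : SimpleGraph W}
    (v₀ : V) (σ : H ≃g H) : lexProd G H ≃g lexProd G H where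
  toEquiv := Equiv.prodShear (Equiv.refl V) fun a ↦ if a = v₀ then σ.toEquiv else Equiv.refl W
  map_rel_iff' := by
    rintro ⟨a, x⟩ ⟨b, y⟩
    change (lexProd G H).Adj _ _ ↔ (lexProd G H).Adj _ _
    by_cases hab : a = b
    · subst hab
      by_cases ha : a = v₀ <;> simp [lexProd, ha, σ.map_rel_iff]
    · simp [lexProd, hab]

section lexProdFiberIso

variable {V W : Type*} [DecidableEq V] (G : SimpleGraph V) {H : SimpleGraph W}

@[simp]
theorem lexProdFiberIso_apply_self (v₀ : V) (σ : H ≃g H) (w : W) :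
    lexProdFiberIso G v₀ σ (v₀, w) = (v₀, σ w) := by
  simp [lexProdFiberIso]

@[simp]
theorem lexProdFiberIso_apply_of_ne {v₀ a : V} (ha : a ≠ v₀) (σ : H ≃g H) (w : W) :
    lexProdFiberIso G v₀ σ (a, w) = (a, w) := by
  simp [lexProdFiberIso, ha]

end lexProdFiberIso

theorem IsDistinguishing.lexProd_fiber {V W α : Type*} {G : SimpleGraph V} {H : SimpleGraph W}
    {φ : V × W → α} (hφ : IsDistinguishing (lexProd G H) φ) (v₀ : V) :
    IsDistinguishing H fun w ↦ φ (v₀, w) := by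
  classical
  intro σ hσ w
  have hfix : ∀ p, φ (lexProdFiberIso G v₀ σ p) = φ p := by
    rintro ⟨a, x⟩
    by_cases ha : a = v₀
    · subst ha
      simpa using hσ x
    · simp [ha]
  simpa using hφ _ hfix (v₀, w)

theorem stmt0_general {V W : Type*} [Fintype V] [Fintype W]
    (G : SimpleGraph V) (H : SimpleGraph W)
    (hG : G.Connected) :
    distinguishingNumber H ≤ distinguishingNumber (lexProd G H) := by
  obtain ⟨v₀⟩ := hG.nonempty
  obtain ⟨φ, hφ⟩ := exists_isDistinguishing_distinguishingNumber (lexProd G H)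
  exact distinguishingNumber_le (hφ.lexProd_fiber v₀)

theorem stmt0 {V W : Type*} [Fintype V] [Fintype W]
    (G : SimpleGraph V) (H : SimpleGraph W)
    (hG : G.Connected) (hH : H.Connected) :
    distinguishingNumber H ≤ distinguishingNumber (lexProd G H) :=
  stmt0_general G H hG
end

section
/- Let G be a connected simple graph with D(G) = 1 such that every automorphism of G[G] is of wreath form. Then for every natural number k ≥ 1, the k-th lexicographic power satisfies D(G^k) = 1. -/
open SimpleGraph

/-- Vertex type of the `k+1`-st lexicographic power. -/
def lexPowType (V : Type*) : ℕ → Type _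
  | 0 => V
  | (k+1) => V × lexPowType V k

/-- `lexPow G k` is the `(k+1)`-st lexicographic power `G^(k+1)`,
so `lexPow G 0 = G^1 = G` and `lexPow G k = G[lexPow G (k-1)]`. -/
def lexPow {V : Type*} (G : SimpleGraph V) : (k : ℕ) → SimpleGraph (lexPowType V k)
  | 0 => G
  | (k+1) => lexProd G (lexPow G k)

/-!
If `G` is asymmetric and `H` is finite, connected and asymmetric, then `G[H]` is asymmetric;
since `G[H]` is also connected, induction on `k` gives that every lexicographic power of `G` is
asymmetric, i.e. has distinguishing number 1.

An automorphism `f` of `G[H]` maps a fibre `{a} × H`, which is a module (every outside vertex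
sees all of it or none of it), onto a module `M`. If `M` met two fibres over `b ≠ b'`, then by
counting `M` contains no whole fibre, so, `H` being connected, every fibre that `M` meets has an
outside vertex adjacent to a vertex of `M`, hence to all of `M`. Thus the first coordinates of
`M` form a clique, every other vertex of `G` sees them uniformly, and `b`, `b'` are twins of `G`,
whose transposition is a nontrivial automorphism. So `f` permutes the fibres, inducing an
automorphism of `G`, which is trivial, and then automorphisms of `H` on the fibres, which are
trivial too.
-/

def IsAsymmetric {U : Type*} (K : SimpleGraph U) : Prop :=
  ∀ σ : K ≃g K, ∀ v, σ v = v

theorem distinguishingNumber_eq_one_iff {U : Type*} [Nonempty U] {K : SimpleGraph U} :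
    distinguishingNumber K = 1 ↔ IsAsymmetric K := by
  set S : Set ℕ :=
    {d | ∃ φ : U → Fin d, ∀ σ : K ≃g K, (∀ v, φ (σ v) = φ v) → ∀ v, σ v = v}
  have zero_notMem : 0 ∉ S := fun ⟨φ, _⟩ => (φ (Classical.arbitrary U)).elim0
  have one_mem_iff : 1 ∈ S ↔ IsAsymmetric K :=
    ⟨fun ⟨φ, hφ⟩ σ => hφ σ fun _ => Subsingleton.elim _ _,
      fun h => ⟨fun _ => 0, fun σ _ => h σ⟩⟩
  change sInf S = 1 ↔ _
  rw [← one_mem_iff]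
  constructor
  · intro h
    have hS : S.Nonempty := Set.nonempty_iff_ne_empty.2 fun hS => by simp [hS] at h
    exact h ▸ Nat.sInf_mem hS
  · intro h
    refine le_antisymm (Nat.sInf_le h) (Nat.one_le_iff_ne_zero.2 ?_)
    rw [Ne, Nat.sInf_eq_zero]
    exact not_or.2 ⟨zero_notMem, Set.nonempty_iff_ne_empty.1 ⟨1, h⟩⟩

theorem IsAsymmetric.eq_of_adj_iff {U : Type*} {K : SimpleGraph U} (hK : IsAsymmetric K)
    {b b' : U} (htwin : ∀ e, e ≠ b → e ≠ b' → (K.Adj e b ↔ K.Adj e b')) : b = b' := by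
  classical
  have swap_adj : ∀ p q, K.Adj p q → K.Adj (Equiv.swap b b' p) (Equiv.swap b b' q) := by
    intro p q h
    have := K.irrefl (v := p)
    have := htwin p
    have := htwin q
    simp only [Equiv.swap_apply_def]
    split_ifs <;> subst_vars <;> grind [K.adj_comm]
  have := hK ⟨Equiv.swap b b', fun {p q} =>
    ⟨fun h => by simpa using swap_adj _ _ h, swap_adj p q⟩⟩ b
  simpa [eq_comm] using this

def IsModule {U : Type*} (K : SimpleGraph U) (M : Set U) : Prop :=
  ∀ r ∉ M, ∀ x ∈ M, ∀ y ∈ M, K.Adj r x → K.Adj r y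

theorem IsModule.image {U U' : Type*} {K : SimpleGraph U} {K' : SimpleGraph U'} {M : Set U}
    (hM : IsModule K M) (f : K ≃g K') : IsModule K' (f '' M) := by
  rintro r hr _ ⟨x, hx, rfl⟩ _ ⟨y, hy, rfl⟩ h
  have hr' : f.symm r ∉ M := fun h' => hr ⟨_, h', f.apply_symm_apply r⟩
  rw [← f.apply_symm_apply r, f.map_adj_iff] at h ⊢
  exact hM _ hr' x hx y hy h

section LexProd

variable {V W : Type*} {G : SimpleGraph V} {H : SimpleGraph W}

theorem lexProd_adj_mk_left {a : V} {x y : W} : (lexProd G H).Adj (a, x) (a, y) ↔ H.Adj x y := by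
  simp [lexProd]

theorem lexProd_adj_of_fst_ne {p q : V × W} (h : p.1 ≠ q.1) :
    (lexProd G H).Adj p q ↔ G.Adj p.1 q.1 := by
  simp [lexProd, h]

theorem isModule_lexProd_range_mk (a : V) : IsModule (lexProd G H) (Set.range (Prod.mk a)) := by
  rintro r hr _ ⟨x, rfl⟩ _ ⟨y, rfl⟩ h
  have hra : r.1 ≠ a := fun hra => hr ⟨r.2, Prod.ext hra.symm rfl⟩
  rw [lexProd_adj_of_fst_ne hra] at h ⊢
  exact h

theorem adj_of_notMem_of_mem {M : Set (V × W)} (hM : IsModule (lexProd G H) M)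
    (hH : H.Preconnected) {c c' : V} {z w w' : W} (hz : (c, z) ∉ M) (hw : (c, w) ∈ M)
    (hw' : (c', w') ∈ M) (hcc' : c ≠ c') : G.Adj c c' := by
  obtain ⟨d, -, hd_out, hd_in⟩ :=
    (hH z w).some.exists_boundary_dart {y | (c, y) ∉ M} hz (not_not.2 hw)
  have := hM _ hd_out _ (not_not.1 hd_in) _ hw' (lexProd_adj_mk_left.2 d.adj)
  rwa [lexProd_adj_of_fst_ne hcc'] at this

theorem adj_of_notMem_fst_image {M : Set (V × W)} (hM : IsModule (lexProd G H) M)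
    {d c c' : V} {w w' : W} (hd : d ∉ Prod.fst '' M) (hw : (c, w) ∈ M) (hw' : (c', w') ∈ M)
    (hdc : G.Adj d c) : G.Adj d c' := by
  have hdc' : d ≠ c' := fun h => hd ⟨_, hw', h.symm⟩
  have hdw : (d, w) ∉ M := fun h => hd ⟨_, h, rfl⟩
  have := hM _ hdw _ hw _ hw' (Or.inl hdc)
  rwa [lexProd_adj_of_fst_ne hdc'] at this

theorem adj_iff_of_isModule {M : Set (V × W)} (hM : IsModule (lexProd G H) M)
    (hH : H.Preconnected) (hproper : ∀ c, ∃ z, (c, z) ∉ M) {p q : V × W} (hp : p ∈ M)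
    (hq : q ∈ M) {e : V} (hep : e ≠ p.1) (heq : e ≠ q.1) : G.Adj e p.1 ↔ G.Adj e q.1 := by
  suffices ∀ p q : V × W, p ∈ M → q ∈ M → e ≠ q.1 → G.Adj e p.1 → G.Adj e q.1 from
    ⟨this p q hp hq heq, this q p hq hp hep⟩
  intro p q hp hq heq hep
  by_cases he : e ∈ Prod.fst '' M
  · obtain ⟨⟨_, w⟩, hw, rfl⟩ := he
    exact adj_of_notMem_of_mem hM hH (hproper _).choose_spec hw hq heq
  · exact adj_of_notMem_fst_image hM he hp hq hep

theorem fst_eq_of_forall_mem_range [Finite W] {g : W → V × W} {c : V}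
    (hc : ∀ z, (c, z) ∈ Set.range g) (x : W) : (g x).1 = c := by
  choose ψ hψ using hc
  have hψ_inj : Function.Injective ψ := fun z z' h => by
    simpa using (hψ z).symm.trans ((congrArg g h).trans (hψ z'))
  obtain ⟨z, rfl⟩ := Finite.surjective_of_injective hψ_inj x
  rw [hψ z]

theorem fst_apply_mk_eq [Finite W] (hG : IsAsymmetric G) (hH : H.Preconnected)
    (f : lexProd G H ≃g lexProd G H) (a : V) (x x' : W) :
    (f (a, x)).1 = (f (a, x')).1 := by
  by_contra hne
  set M := Set.range fun y => f (a, y)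
  have hM : IsModule (lexProd G H) M := by
    simpa only [M, Set.range_comp'] using (isModule_lexProd_range_mk a).image f
  have hproper : ∀ c, ∃ z, (c, z) ∉ M := by
    by_contra! hc
    obtain ⟨c, hc⟩ := hc
    have := fst_eq_of_forall_mem_range hc
    exact hne ((this x).trans (this x').symm)
  exact hne <| hG.eq_of_adj_iff fun e he he' =>
    adj_iff_of_isModule hM hH hproper ⟨x, rfl⟩ ⟨x', rfl⟩ he he'

theorem fst_apply_eq_fst [Finite W] (hG : IsAsymmetric G) (hH : H.Preconnected)
    (f : lexProd G H ≃g lexProd G H) (p : V × W) : (f p).1 = p.1 := by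
  obtain ⟨a, w⟩ := p
  let α₀ (g : lexProd G H ≃g lexProd G H) (b : V) : V := (g (b, w)).1
  have α₀_symm : ∀ g b, α₀ g.symm (α₀ g b) = b := fun g b => by
    simp only [α₀]
    rw [fst_apply_mk_eq hG hH g.symm _ w (g (b, w)).2, g.symm_apply_apply]
  have α₀_adj : ∀ g b b', G.Adj b b' → G.Adj (α₀ g b) (α₀ g b') := fun g b b' h => by
    have hne : α₀ g b ≠ α₀ g b' := fun h' =>
      h.ne (by simpa [α₀_symm] using congrArg (α₀ g.symm) h')
    exact (lexProd_adj_of_fst_ne hne).1 (g.map_adj_iff.2 (Or.inl h))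
  let α : G ≃g G :=
    ⟨⟨α₀ f, α₀ f.symm, α₀_symm f, α₀_symm f.symm⟩,
      fun {b b'} =>
        ⟨fun h => by simpa [α₀_symm] using α₀_adj f.symm (α₀ f b) (α₀ f b') h, α₀_adj f b b'⟩⟩
  exact hG α a

theorem isAsymmetric_lexProd [Finite W] (hG : IsAsymmetric G) (hH : IsAsymmetric H)
    (hconn : H.Preconnected) : IsAsymmetric (lexProd G H) := by
  rintro f ⟨a, x⟩
  have mk_eq : ∀ (g : lexProd G H ≃g lexProd G H) y, g (a, y) = (a, (g (a, y)).2) :=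
    fun g y => Prod.ext (fst_apply_eq_fst hG hconn g _) rfl
  let β : H ≃g H :=
    ⟨⟨fun y => (f (a, y)).2, fun y => (f.symm (a, y)).2,
      fun y => by simp [← mk_eq], fun y => by simp [← mk_eq]⟩,
      fun {y y'} => by
        rw [← lexProd_adj_mk_left (G := G) (a := a)]
        simp only [Equiv.coe_fn_mk, ← mk_eq, f.map_adj_iff, lexProd_adj_mk_left]⟩
  exact Prod.ext (fst_apply_eq_fst hG hconn f _) (hH β x)

theorem connected_lexProd (hG : G.Connected) (hH : H.Connected) : (lexProd G H).Connected := by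
  have : Nonempty V := hG.nonempty
  have : Nonempty W := hH.nonempty
  refine (connected_iff _).2 ⟨?_, inferInstance⟩
  rintro ⟨a, x⟩ ⟨b, y⟩
  have along_fiber : (lexProd G H).Reachable (b, x) (b, y) :=
    (hH.preconnected x y).map ⟨Prod.mk b, lexProd_adj_mk_left.2⟩
  have along_base : (lexProd G H).Reachable (a, x) (b, x) :=
    (hG.preconnected a b).map ⟨(·, x), fun h => Or.inl h⟩
  exact along_base.trans along_fiber

end LexProd

instance {V : Type*} [Finite V] (k : ℕ) : Finite (lexPowType V k) := by
  induction k with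
  | zero => exact ‹Finite V›
  | succ k ih => exact inferInstanceAs (Finite (V × lexPowType V k))

theorem stmt6_general {V : Type*} [Fintype V] (G : SimpleGraph V)
    (hG : G.Connected) (hD : distinguishingNumber G = 1) (k : ℕ) :
    distinguishingNumber (lexPow G (k - 1)) = 1 := by
  have : Nonempty V := hG.nonempty
  have hGa : IsAsymmetric G := distinguishingNumber_eq_one_iff.1 hD
  have hpow : ∀ j, (lexPow G j).Connected ∧ IsAsymmetric (lexPow G j) := by
    intro j
    induction j with
    | zero => exact ⟨hG, hGa⟩
    | succ j ih =>
      exact ⟨connected_lexProd hG ih.1, isAsymmetric_lexProd hGa ih.2 ih.1.preconnected⟩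
  have := (hpow (k - 1)).1.nonempty
  exact distinguishingNumber_eq_one_iff.2 (hpow (k - 1)).2

theorem stmt6 {V : Type*} [Fintype V] (G : SimpleGraph V)
    (hG : G.Connected) (hD : distinguishingNumber G = 1) (hw : wreathForm G G)
    (k : ℕ) (hk : 1 ≤ k) :
    distinguishingNumber (lexPow G (k - 1)) = 1 :=
  stmt6_general G hG hD k
end

section
/- For all integers m ≥ 1 with m ≠ 2 and n ≥ 3, the lexicographic product P_m[P_n] of the paths of orders m and n has distinguishing index D'(P_m[P_n]) = 2. -/
open SimpleGraph

/-!
An automorphism of `G[H]` preserves the `H`-degree of the second coordinate, because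
`deg (a, x) = deg_G a * |H| + deg_H x` with `deg_H x < |H|`.

Mark the edges `(a, x)(b, x)` joining copies of the same vertex of `P_n`, and the edge
`(0, 0)(0, 1)`. An automorphism preserving the marking fixes `(0, 0)` and `(0, 1)`, whose
`P_n`-degrees are `1 ≠ 2`; it then fixes the fibre over `0` step by step along `P_n`. Each further
fibre `a + 1` is mapped into itself, since its image is adjacent to the fixed fibre `a` while the
fibres `≤ a` are already fixed pointwise; and it is fixed pointwise, because the marked edge
`(a + 1, x)(a, x)` must go to a marked edge. A single label does not suffice since reversing every
fibre is a nontrivial automorphism.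
-/

namespace SimpleGraph

section LexProd

variable {V W : Type*} {G : SimpleGraph V} {H : SimpleGraph W}

@[simp]
lemma lexProd_adj {p q : V × W} :
    (lexProd G H).Adj p q ↔ G.Adj p.1 q.1 ∨ (p.1 = q.1 ∧ H.Adj p.2 q.2) :=
  Iff.rfl

instance [DecidableEq V] [DecidableRel G.Adj] [DecidableRel H.Adj] :
    DecidableRel (lexProd G H).Adj :=
  fun _ _ => decidable_of_iff' _ lexProd_adj

lemma lexProd_fst_eq_of_adj_of_not_adj {q : V × W} {a : V} {y z : W}
    (hy : (lexProd G H).Adj q (a, y)) (hz : ¬ (lexProd G H).Adj q (a, z)) : q.1 = a := by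
  by_contra h
  exact hz (Or.inl (hy.resolve_right fun h' => h h'.1))

def Iso.lexProdRight {W' : Type*} {H' : SimpleGraph W'} (τ : H ≃g H') :
    lexProd G H ≃g lexProd G H' where
  toEquiv := (Equiv.refl V).prodCongr τ.toEquiv
  map_rel_iff' := by simp [τ.map_adj_iff]

@[simp]
lemma Iso.lexProdRight_apply {W' : Type*} {H' : SimpleGraph W'} (τ : H ≃g H') (p : V × W) :
    Iso.lexProdRight (G := G) τ p = (p.1, τ p.2) :=
  rfl

variable [Fintype V] [Fintype W] [DecidableEq V] [DecidableEq W]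
  [DecidableRel G.Adj] [DecidableRel H.Adj]

lemma lexProd_neighborFinset (p : V × W) :
    (lexProd G H).neighborFinset p =
      G.neighborFinset p.1 ×ˢ Finset.univ ∪ {p.1} ×ˢ H.neighborFinset p.2 := by
  ext ⟨b, y⟩
  simp [eq_comm, and_comm]

lemma lexProd_degree (p : V × W) :
    (lexProd G H).degree p = G.degree p.1 * Fintype.card W + H.degree p.2 := by
  have hdisj :
      Disjoint (G.neighborFinset p.1 ×ˢ Finset.univ) ({p.1} ×ˢ H.neighborFinset p.2) := by
    simp only [Finset.disjoint_left, Finset.mem_product, mem_neighborFinset, Finset.mem_singleton]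
    rintro q ⟨hadj, -⟩ ⟨heq, -⟩
    exact G.ne_of_adj hadj heq.symm
  rw [← card_neighborFinset_eq_degree, lexProd_neighborFinset,
    Finset.card_union_of_disjoint hdisj]
  simp

lemma lexProd_degree_mod_card (p : V × W) :
    (lexProd G H).degree p % Fintype.card W = H.degree p.2 := by
  rw [lexProd_degree, mul_comm, Nat.mul_add_mod, Nat.mod_eq_of_lt (H.degree_lt_card_verts _)]

lemma Iso.degree_snd_lexProd (σ : lexProd G H ≃g lexProd G H) (p : V × W) :
    H.degree (σ p).2 = H.degree p.2 := by
  rw [← lexProd_degree_mod_card (G := G), ← lexProd_degree_mod_card (G := G), σ.degree_eq]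

end LexProd

section Distinguishing

variable {V : Type*} {G : SimpleGraph V}

def IsDistinguishingEdgeLabeling {d : ℕ} (ψ : G.edgeSet → Fin d) : Prop :=
  ∀ σ : G ≃g G, (∀ e, ψ (σ.mapEdgeSet e) = ψ e) → ∀ v, σ v = v

lemma distinguishingIndex_eq_two {ψ : G.edgeSet → Fin 2} (hψ : IsDistinguishingEdgeLabeling ψ)
    (e : G.edgeSet) {σ : G ≃g G} {v : V} (hσv : σ v ≠ v) : distinguishingIndex G = 2 := by
  refine le_antisymm (Nat.sInf_le ⟨ψ, hψ⟩) (le_csInf ⟨2, ψ, hψ⟩ ?_)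
  rintro d ⟨φ, hφ⟩
  by_contra! hd
  interval_cases d
  · exact (φ e).elim0
  · exact hσv (hφ σ (fun _ => Subsingleton.elim _ _) v)

def Iso.PreservesMarkedEdges (r : V → V → Prop) (σ : G ≃g G) : Prop :=
  ∀ p q, G.Adj p q → r p q → r (σ p) (σ q)

lemma exists_isDistinguishingEdgeLabeling_of_marked (r : V → V → Prop) (hr : Std.Symm r)
    (h : ∀ σ : G ≃g G, σ.PreservesMarkedEdges r → ∀ v, σ v = v) :
    ∃ ψ : G.edgeSet → Fin 2, IsDistinguishingEdgeLabeling ψ := by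
  classical
  refine ⟨fun e => if e.1 ∈ Sym2.fromRel hr then 1 else 0,
    fun σ hσ => h σ fun p q hpq hS => ?_⟩
  by_contra hS'
  simpa [Iso.mapEdgeSet, Hom.mapEdgeSet, hS, hS'] using hσ ⟨s(p, q), hpq⟩

end Distinguishing

section PathGraph

variable {n : ℕ}

instance : DecidableRel (pathGraph n).Adj :=
  fun _ _ => decidable_of_iff' _ pathGraph_adj

lemma pathGraph_degree_of_val_eq_zero {x : Fin n} (hx : x.val = 0) (hn : 2 ≤ n) :
    (pathGraph n).degree x = 1 := by
  rw [← card_neighborFinset_eq_degree, Finset.card_eq_one]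
  refine ⟨⟨1, by omega⟩, ?_⟩
  ext y
  simp only [mem_neighborFinset, pathGraph_adj, Finset.mem_singleton, Fin.ext_iff]
  omega

lemma pathGraph_degree_of_pos_of_lt {x : Fin n} (h0 : 0 < x.val) (h1 : x.val + 1 < n) :
    (pathGraph n).degree x = 2 := by
  rw [← card_neighborFinset_eq_degree, Finset.card_eq_two]
  refine ⟨⟨x.val - 1, by omega⟩, ⟨x.val + 1, h1⟩, by simp [Fin.ext_iff], ?_⟩
  ext y
  simp only [mem_neighborFinset, pathGraph_adj, Finset.mem_insert, Finset.mem_singleton,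
    Fin.ext_iff]
  omega

def pathGraphRev (n : ℕ) : pathGraph n ≃g pathGraph n where
  toEquiv := Fin.revPerm
  map_rel_iff' := by
    intro x y
    simp only [Fin.revPerm_apply, pathGraph_adj, Fin.val_rev]
    omega

@[simp]
lemma pathGraphRev_apply (x : Fin n) : pathGraphRev n x = x.rev :=
  rfl

end PathGraph

section Fixing

variable {V W : Type*} {n : ℕ}

lemma Iso.lexProd_pathGraph_apply_eq_self_of_le_one {G : SimpleGraph V}
    (σ : lexProd G (pathGraph n) ≃g lexProd G (pathGraph n)) (a : V)
    (h : ∀ x : Fin n, x.val ≤ 1 → σ (a, x) = (a, x)) (x : Fin n) : σ (a, x) = (a, x) := by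
  suffices ∀ k (x : Fin n), x.val = k → σ (a, x) = (a, x) from this _ x rfl
  intro k
  induction k using Nat.strong_induction_on with | _ k ih => ?_
  rintro x rfl
  rcases Nat.lt_or_ge x.val 2 with hx | hx
  · exact h x (by omega)
  let y : Fin n := ⟨x.val - 1, by omega⟩
  let z : Fin n := ⟨0, by omega⟩
  let w : Fin n := ⟨x.val - 2, by omega⟩
  have hy : (lexProd G (pathGraph n)).Adj (σ (a, x)) (a, y) := by
    rw [← ih y.val (show x.val - 1 < x.val by omega) y rfl, σ.map_adj_iff]
    exact Or.inr ⟨rfl, pathGraph_adj.2 (Or.inr (show x.val - 1 + 1 = x.val by omega))⟩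
  have hz : ¬ (lexProd G (pathGraph n)).Adj (σ (a, x)) (a, z) := by
    rw [← h z (Nat.zero_le 1), σ.map_adj_iff]
    simp only [lexProd_adj, SimpleGraph.irrefl, pathGraph_adj, true_and, false_or, z]
    omega
  have hw : σ (a, x) ≠ (a, w) := by
    rw [← ih w.val (show x.val - 2 < x.val by omega) w rfl]
    exact σ.injective.ne (by simp only [ne_eq, Prod.mk.injEq, Fin.ext_iff, true_and, w]; omega)
  have hfst := lexProd_fst_eq_of_adj_of_not_adj hy hz
  generalize σ (a, x) = q at hy hw hfst
  obtain ⟨b, u⟩ := q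
  obtain rfl : b = a := hfst
  simp only [lexProd_adj, SimpleGraph.irrefl, pathGraph_adj, true_and, false_or, ne_eq,
    Prod.mk.injEq, Fin.ext_iff, y, w] at hy hw ⊢
  omega

lemma Iso.lexProd_pathGraph_fst_apply_eq {m : ℕ} {H : SimpleGraph W}
    (σ : lexProd (pathGraph m) H ≃g lexProd (pathGraph m) H) (p : Fin m × W)
    (hp : 0 < p.1.val) (h : ∀ q : Fin m × W, q.1.val < p.1.val → σ q = q) :
    (σ p).1 = p.1 := by
  let b : Fin m := ⟨p.1.val - 1, by omega⟩
  have hadj : (lexProd (pathGraph m) H).Adj (σ p) (b, p.2) := by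
    rw [← h (b, p.2) (show p.1.val - 1 < p.1.val by omega), σ.map_adj_iff]
    exact Or.inl (pathGraph_adj.2 (Or.inr (show p.1.val - 1 + 1 = p.1.val by omega)))
  have hge : p.1.val ≤ (σ p).1.val := by
    by_contra! hlt
    rw [σ.injective (h (σ p) hlt)] at hlt
    exact lt_irrefl _ hlt
  simp only [lexProd_adj, pathGraph_adj, Fin.ext_iff, b] at hadj
  ext
  omega

end Fixing

section Marking

variable {m n : ℕ}

def LexPathMarked (p q : Fin m × Fin n) : Prop :=
  (p.1 ≠ q.1 ∧ p.2 = q.2) ∨ (p.1 = q.1 ∧ p.1.val = 0 ∧ p.2.val + q.2.val = 1)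

lemma lexPathMarked_symm : Std.Symm (LexPathMarked (m := m) (n := n)) where
  symm p q h := by
    simp only [LexPathMarked, ne_eq, Fin.ext_iff] at h ⊢
    omega

variable (σ : lexProd (pathGraph m) (pathGraph n) ≃g lexProd (pathGraph m) (pathGraph n))

lemma Iso.apply_eq_self_of_fst_val_eq_zero (hn : 3 ≤ n)
    (hσ : σ.PreservesMarkedEdges LexPathMarked)
    (p : Fin m × Fin n) (hp1 : p.1.val = 0) (hp2 : p.2.val ≤ 1) : σ p = p := by
  let x0 : Fin n := ⟨0, by omega⟩
  let x1 : Fin n := ⟨1, by omega⟩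
  have hmark := hσ (p.1, x0) (p.1, x1) (Or.inr ⟨rfl, pathGraph_adj.2 (Or.inl rfl)⟩)
    (Or.inr ⟨rfl, hp1, rfl⟩)
  have hd0 : (pathGraph n).degree (σ (p.1, x0)).2 = 1 := by
    rw [Iso.degree_snd_lexProd]
    exact pathGraph_degree_of_val_eq_zero rfl (by omega)
  have hd1 : (pathGraph n).degree (σ (p.1, x1)).2 = 2 := by
    rw [Iso.degree_snd_lexProd]
    exact pathGraph_degree_of_pos_of_lt Nat.one_pos (show 1 + 1 < n by omega)
  have hne0 : (σ (p.1, x1)).2.val ≠ 0 := fun h => by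
    rw [pathGraph_degree_of_val_eq_zero h (by omega)] at hd1
    omega
  have hne : (σ (p.1, x0)).2 ≠ (σ (p.1, x1)).2 := fun h => by
    rw [h, hd1] at hd0
    omega
  have hfix : σ (p.1, x0) = (p.1, x0) ∧ σ (p.1, x1) = (p.1, x1) := by
    generalize σ (p.1, x0) = u at hmark hne
    generalize σ (p.1, x1) = w at hmark hne hne0
    simp only [LexPathMarked, Prod.ext_iff, Fin.ext_iff, ne_eq, x0, x1] at hmark hne hne0 ⊢
    omega
  obtain hp | hp : p = (p.1, x0) ∨ p = (p.1, x1) := by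
    simp only [Prod.ext_iff, Fin.ext_iff, x0, x1, true_and]
    omega
  · rw [hp]
    exact hfix.1
  · rw [hp]
    exact hfix.2

lemma Iso.apply_eq_self_of_forall_fst_lt
    (hσ : σ.PreservesMarkedEdges LexPathMarked)
    (p : Fin m × Fin n) (hp : 0 < p.1.val)
    (h : ∀ q : Fin m × Fin n, q.1.val < p.1.val → σ q = q) :
    σ p = p := by
  let q : Fin m × Fin n := (⟨p.1.val - 1, by omega⟩, p.2)
  have hfst := σ.lexProd_pathGraph_fst_apply_eq p hp h
  have hmark := hσ p q
    (Or.inl (pathGraph_adj.2 (Or.inr (show p.1.val - 1 + 1 = p.1.val by omega))))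
    (Or.inl ⟨Fin.ne_of_val_ne (show p.1.val ≠ p.1.val - 1 by omega), rfl⟩)
  rw [h q (show p.1.val - 1 < p.1.val by omega)] at hmark
  simp only [LexPathMarked, hfst, Fin.ext_iff, q] at hmark
  exact Prod.ext hfst (by omega)

theorem Iso.apply_eq_self_of_preservesMarkedEdges (hn : 3 ≤ n)
    (hσ : σ.PreservesMarkedEdges LexPathMarked)
    (p : Fin m × Fin n) : σ p = p := by
  suffices ∀ k (p : Fin m × Fin n), p.1.val = k → σ p = p from this _ p rfl
  intro k
  induction k using Nat.strong_induction_on with | _ k ih => ?_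
  rintro p rfl
  rcases Nat.eq_zero_or_pos p.1.val with hp | hp
  · exact σ.lexProd_pathGraph_apply_eq_self_of_le_one p.1
      (fun x hx => σ.apply_eq_self_of_fst_val_eq_zero hn hσ _ hp hx) p.2
  · exact σ.apply_eq_self_of_forall_fst_lt hσ p hp fun q hq => ih _ hq q rfl

end Marking

end SimpleGraph

theorem stmt8_general (m n : ℕ) (hm : 1 ≤ m) (hn : 3 ≤ n) :
    distinguishingIndex (lexProd (SimpleGraph.pathGraph m) (SimpleGraph.pathGraph n)) = 2 := by
  obtain ⟨ψ, hψ⟩ := exists_isDistinguishingEdgeLabeling_of_marked _ lexPathMarked_symm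
    fun σ hσ => σ.apply_eq_self_of_preservesMarkedEdges hn hσ
  let a : Fin m := ⟨0, hm⟩
  let x : Fin n := ⟨0, by omega⟩
  let y : Fin n := ⟨1, by omega⟩
  have hxy : s((a, x), (a, y)) ∈ (lexProd (pathGraph m) (pathGraph n)).edgeSet :=
    Or.inr ⟨rfl, pathGraph_adj.2 (Or.inl rfl)⟩
  refine distinguishingIndex_eq_two hψ ⟨_, hxy⟩ (σ := Iso.lexProdRight (pathGraphRev n))
    (v := (a, x)) ?_
  simp only [Iso.lexProdRight_apply, pathGraphRev_apply, ne_eq, Prod.mk.injEq, true_and,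
    Fin.ext_iff, Fin.val_rev, x]
  omega

theorem stmt8 (m n : ℕ) (hm : 1 ≤ m) (hm2 : m ≠ 2) (hn : 3 ≤ n) :
    distinguishingIndex (lexProd (SimpleGraph.pathGraph m) (SimpleGraph.pathGraph n)) = 2 :=
  stmt8_general m n hm hn
end

section
/- For all integers m > 2 and n > 5, the lexicographic product P_m[C_n] of the path of order m with the cycle of order n has distinguishing index D'(P_m[C_n]) = 2. -/
/-!
Every automorphism of `P_m[C_n]` permutes the `C_n`-fibres. Indeed, if an edge `uv` inside a
fibre were sent to an edge between two fibres, then pulling back the (at least two) non-neighbours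
of `σ v` in its own fibre would give at least two neighbours of `u` that are not neighbours of `v`,
whereas in `C_n` the vertex `u` has only one neighbour besides `v`. So an automorphism acts as
`(a, x) ↦ (α a, β_a x)` with `α` an automorphism of `P_m` and each `β_a` one of `C_n`.

Label `1` the edges `{0,1}, {1,2}, {3,4}` inside every fibre and the single edge joining `(0,0)`
to `(1,0)`, and `0` all other edges. Preserving the cross edge forces `α = id` (as `m ≥ 3`), and
the pattern inside a fibre has trivial stabiliser in the dihedral group once `n ≥ 6`, forcing
`β_a = id`. One label does not suffice because rotating all fibres is a nontrivial automorphism.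
-/

open SimpleGraph

section Labeling

variable {V : Type*} {G : SimpleGraph V}

theorem exists_edge_labeling_of_rigid_subgraph (K : SimpleGraph V) (hK : K ≤ G)
    (hrigid : ∀ σ : G ≃g G, (∀ u v, K.Adj u v → K.Adj (σ u) (σ v)) → ∀ v, σ v = v) :
    ∃ ψ : G.edgeSet → Fin 2,
      ∀ σ : G ≃g G, (∀ e, ψ (σ.mapEdgeSet e) = ψ e) → ∀ v, σ v = v := by
  classical
  refine ⟨fun e => if e.1 ∈ K.edgeSet then 1 else 0, fun σ hσ => hrigid σ fun u v huv => ?_⟩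
  have := hσ ⟨s(u, v), hK huv⟩
  simpa [Iso.mapEdgeSet, huv] using this

theorem distinguishingIndex_eq_two_of_edge_labeling
    (h : ∃ ψ : G.edgeSet → Fin 2,
      ∀ σ : G ≃g G, (∀ e, ψ (σ.mapEdgeSet e) = ψ e) → ∀ v, σ v = v)
    (σ₀ : G ≃g G) (v₀ : V) (hσ₀ : σ₀ v₀ ≠ v₀) : distinguishingIndex G = 2 := by
  refine le_antisymm (Nat.sInf_le h) (le_csInf ⟨2, h⟩ ?_)
  rintro d ⟨ψ, hψ⟩
  by_contra! hd
  have : Subsingleton (Fin d) := Fin.subsingleton_iff_le_one.mpr (by omega)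
  exact hσ₀ (hψ σ₀ (fun _ => Subsingleton.elim _ _) v₀)

end Labeling

section LexProd

variable {V W : Type*} {G : SimpleGraph V} {H : SimpleGraph W}

theorem lexProd_mono {G' : SimpleGraph V} {H' : SimpleGraph W} (hG : G ≤ G') (hH : H ≤ H') :
    lexProd G H ≤ lexProd G' H' := by
  rintro u v (h | ⟨h₁, h₂⟩)
  · exact Or.inl (hG h)
  · exact Or.inr ⟨h₁, hH h₂⟩

def lexProdCongrRight (β : H ≃g H) : lexProd G H ≃g lexProd G H where
  toEquiv := Equiv.prodCongr (Equiv.refl V) β.toEquiv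
  map_rel_iff' := or_congr_right (and_congr_right fun _ => β.map_adj_iff)

theorem lexProd_fst_eq_of_adj_of_not_adj {u v w : V × W} (huv : u.1 = v.1)
    (huw : (lexProd G H).Adj u w) (hvw : ¬ (lexProd G H).Adj v w) :
    w.1 = u.1 ∧ H.Adj u.2 w.2 := by
  rcases huw with h | ⟨h₁, h₂⟩
  · exact absurd (Or.inl (huv ▸ h)) hvw
  · exact ⟨h₁.symm, h₂⟩

theorem lexProd_aut_fst_eq_of_adj
    (hdeg : ∀ x y, H.Adj x y → {z | H.Adj x z ∧ z ≠ y}.Subsingleton)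
    (hfar : ∀ y, {z | z ≠ y ∧ ¬ H.Adj y z}.Nontrivial)
    (σ : lexProd G H ≃g lexProd G H) {u v : V × W} (h₁ : u.1 = v.1) (h₂ : H.Adj u.2 v.2) :
    (σ u).1 = (σ v).1 := by
  by_contra hne
  have hb : G.Adj (σ u).1 (σ v).1 :=
    (σ.map_adj_iff.mpr (Or.inr ⟨h₁, h₂⟩)).resolve_right fun h => hne h.1
  -- Pulled back by `σ`, the non-neighbours of `σ v` in its fibre become neighbours of `u`
  -- that are not neighbours of `v`; in `H` there is at most one such vertex.
  have pull : ∀ t ∈ {z | z ≠ (σ v).2 ∧ ¬ H.Adj (σ v).2 z},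
      (σ.symm ((σ v).1, t)).1 = u.1 ∧ (σ.symm ((σ v).1, t)).2 ∈ {z | H.Adj u.2 z ∧ z ≠ v.2} := by
    rintro t ⟨htv, hadj⟩
    set w := σ.symm ((σ v).1, t)
    have hσw : σ w = ((σ v).1, t) := σ.apply_symm_apply _
    have huw : (lexProd G H).Adj u w := σ.map_adj_iff.mp (hσw ▸ Or.inl hb)
    have hvw : ¬ (lexProd G H).Adj v w := by
      rw [← σ.map_adj_iff, hσw]
      rintro (h | ⟨-, h⟩)
      exacts [G.irrefl h, hadj h]
    obtain ⟨hw₁, hw₂⟩ := lexProd_fst_eq_of_adj_of_not_adj h₁ huw hvw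
    refine ⟨hw₁, hw₂, fun h => htv ?_⟩
    have hσv := congrArg Prod.snd hσw
    rw [show w = v from Prod.ext (hw₁.trans h₁) h] at hσv
    exact hσv.symm
  obtain ⟨z, hz, z', hz', hzz'⟩ := hfar (σ v).2
  have hsame : σ.symm ((σ v).1, z) = σ.symm ((σ v).1, z') :=
    Prod.ext ((pull z hz).1.trans (pull z' hz').1.symm)
      (hdeg _ _ h₂ (pull z hz).2 (pull z' hz').2)
  exact hzz' (congrArg Prod.snd (σ.symm.injective hsame))

theorem lexProd_aut_fst_eq_iff
    (hdeg : ∀ x y, H.Adj x y → {z | H.Adj x z ∧ z ≠ y}.Subsingleton)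
    (hfar : ∀ y, {z | z ≠ y ∧ ¬ H.Adj y z}.Nontrivial) (hH : H.Preconnected)
    (σ : lexProd G H ≃g lexProd G H) (u v : V × W) : (σ u).1 = (σ v).1 ↔ u.1 = v.1 := by
  have fibre : ∀ τ : lexProd G H ≃g lexProd G H, ∀ a x y, (τ (a, x)).1 = (τ (a, y)).1 := by
    intro τ a x y
    obtain ⟨p⟩ := hH x y
    induction p with
    | nil => rfl
    | @cons x z _ h _ ih =>
      exact (lexProd_aut_fst_eq_of_adj hdeg hfar τ (u := (a, x)) (v := (a, z)) rfl h).trans ih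
  constructor
  · intro h
    calc u.1 = (σ.symm ((σ u).1, (σ u).2)).1 := by simp
      _ = (σ.symm ((σ u).1, (σ v).2)).1 := fibre σ.symm _ _ _
      _ = v.1 := by rw [h]; simp
  · obtain ⟨a, x⟩ := u
    obtain ⟨b, y⟩ := v
    rintro (rfl : a = b)
    exact fibre σ a x y

theorem lexProd_aut_eq_self
    (hdeg : ∀ x y, H.Adj x y → {z | H.Adj x z ∧ z ≠ y}.Subsingleton)
    (hfar : ∀ y, {z | z ≠ y ∧ ¬ H.Adj y z}.Nontrivial) (hH : H.Preconnected)
    (K : SimpleGraph W) {a₀ a₁ : V} (ha : a₀ ≠ a₁) (x₀ : W)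
    (hG : ∀ α : G →g G, Function.Injective α → s(α a₀, α a₁) = s(a₀, a₁) → ∀ a, α a = a)
    (hK : ∀ β : H →g H, Function.Injective β →
      (∀ x y, K.Adj x y → K.Adj (β x) (β y)) → ∀ x, β x = x)
    (σ : lexProd G H ≃g lexProd G H)
    (hσ : ∀ u v, (lexProd ⊥ K ⊔ edge (a₀, x₀) (a₁, x₀)).Adj u v →
      (lexProd ⊥ K ⊔ edge (a₀, x₀) (a₁, x₀)).Adj (σ u) (σ v)) :
    ∀ p, σ p = p := by
  have hfst := lexProd_aut_fst_eq_iff hdeg hfar hH σ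
  let α : G →g G :=
    ⟨fun a => (σ (a, x₀)).1, fun hab =>
      (σ.map_adj_iff.mpr (Or.inl hab)).resolve_right fun h => hab.ne ((hfst _ _).mp h.1)⟩
  let β (a : V) : H →g H :=
    ⟨fun x => (σ (a, x)).2, fun {x y} hxy =>
      ((σ.map_adj_iff (v := (a, x)) (w := (a, y))).mpr (Or.inr ⟨rfl, hxy⟩)).resolve_left
        (fun h => h.ne ((hfst (a, x) (a, y)).mpr rfl)) |>.2⟩
  have hα : Function.Injective α := fun a b h => (hfst (a, x₀) (b, x₀)).mp h
  have hβ (a : V) : Function.Injective (β a) := fun x y h =>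
    congrArg Prod.snd (σ.injective (Prod.ext ((hfst (a, x) (a, y)).mpr rfl) h))
  have hα_id : ∀ a, α a = a := by
    refine hG α hα ?_
    have hcross := hσ (a₀, x₀) (a₁, x₀) (Or.inr ((edge_adj ..).mpr ⟨Or.inl ⟨rfl, rfl⟩, by simpa⟩))
    rcases hcross with (h | ⟨h, -⟩) | h
    · exact h.elim
    · exact absurd ((hfst _ _).mp h) ha
    · rcases ((edge_adj ..).mp h).1 with ⟨h₀, h₁⟩ | ⟨h₀, h₁⟩
      · exact Sym2.eq_iff.mpr (Or.inl ⟨congrArg Prod.fst h₀, congrArg Prod.fst h₁⟩)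
      · exact Sym2.eq_iff.mpr (Or.inr ⟨congrArg Prod.fst h₀, congrArg Prod.fst h₁⟩)
  have hβ_id (a : V) : ∀ x, β a x = x := by
    refine hK (β a) (hβ a) fun x y hxy => ?_
    rcases hσ (a, x) (a, y) (Or.inl (Or.inr ⟨rfl, hxy⟩)) with (h | ⟨-, h⟩) | h
    · exact h.elim
    · exact h
    · have hsame : (σ (a, x)).1 = (σ (a, y)).1 := (hfst _ _).mpr rfl
      rcases ((edge_adj ..).mp h).1 with ⟨h₀, h₁⟩ | ⟨h₀, h₁⟩ <;> rw [h₀, h₁] at hsame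
      exacts [(ha hsame).elim, (ha hsame.symm).elim]
  rintro ⟨a, x⟩
  exact Prod.ext (((hfst (a, x) (a, x₀)).mpr rfl).trans (hα_id a)) (hβ_id a x)

end LexProd

theorem hom_eq_self_of_fixes_zero_one {m : ℕ} [NeZero m] {G : SimpleGraph (Fin m)}
    (hpath : pathGraph m ≤ G)
    (hinterior : ∀ x y : Fin m, G.Adj x y → 0 < x.val → x.val + 1 < m →
      y.val + 1 = x.val ∨ x.val + 1 = y.val)
    (f : G →g G) (hf : Function.Injective f) (h₀ : f 0 = 0) (h₁ : f 1 = 1) : ∀ a, f a = a := by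
  suffices h : ∀ t (ht : t < m), (f ⟨t, ht⟩).val = t from fun a => Fin.ext (h a.val a.isLt)
  intro t
  induction t using Nat.twoStepInduction with
  | zero => intro ht; simp [h₀]
  | one =>
    intro ht
    rw [show (⟨1, ht⟩ : Fin m) = 1 from Fin.ext (Nat.mod_eq_of_lt ht).symm, h₁]
    exact Nat.mod_eq_of_lt ht
  | more s ih₀ ih₁ =>
    intro ht
    have ih₀ := ih₀ (by omega)
    have ih₁ := ih₁ (by omega)
    have hadj : G.Adj (f ⟨s + 1, by omega⟩) (f ⟨s + 2, ht⟩) :=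
      f.map_adj (hpath (pathGraph_adj.mpr (Or.inl rfl)))
    rcases hinterior _ _ hadj (by omega) (by omega) with h | h
    · have := hf (Fin.ext (ih₀.trans (by omega)) : f ⟨s, by omega⟩ = f ⟨s + 2, ht⟩)
      simp at this
    · omega

theorem pathGraph_hom_eq_self {m : ℕ} [NeZero m] (hm : 2 < m)
    (f : pathGraph m →g pathGraph m) (hf : Function.Injective f) (h : s(f 0, f 1) = s(0, 1)) :
    ∀ a, f a = a := by
  rcases Sym2.eq_iff.mp h with ⟨h₀, h₁⟩ | ⟨h₀, h₁⟩
  · exact hom_eq_self_of_fixes_zero_one le_rfl (fun _ _ hxy _ _ => (pathGraph_adj.mp hxy).symm)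
      f hf h₀ h₁
  · -- `f` cannot swap `0` and `1`: then `f 2`, a neighbour of `f 1 = 0`, would be `1 = f 0`.
    have h₁₂ : (pathGraph m).Adj 1 2 :=
      pathGraph_adj.mpr (Or.inl (by simp (disch := omega) [Nat.mod_eq_of_lt]))
    have h₂ := pathGraph_adj.mp (f.map_adj h₁₂)
    rw [h₁] at h₂
    have := hf (Fin.ext (by rw [h₀]; simp (disch := omega) [Nat.mod_eq_of_lt] at h₂ ⊢; omega) :
      f 0 = f 2)
    simp (disch := omega) [Fin.ext_iff, Nat.mod_eq_of_lt] at this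

theorem cycleGraph_adj_val {n : ℕ} {x y : Fin n} (h : (cycleGraph n).Adj x y) (hx₀ : 0 < x.val)
    (hx : x.val + 1 < n) : y.val + 1 = x.val ∨ x.val + 1 = y.val := by
  obtain ⟨k, rfl⟩ : ∃ k, n = k + 2 := ⟨n - 2, by omega⟩
  rw [← mem_neighborSet, cycleGraph_neighborSet] at h
  rcases h with rfl | rfl
  · left
    rw [Fin.coe_sub_one, if_neg (Fin.pos_iff_ne_zero.mp hx₀)]
    omega
  · exact Or.inr (Fin.val_add_one_of_lt' hx).symm

theorem cycleGraph_neighbors_ne_subsingleton {n : ℕ} {x y : Fin n} (hxy : (cycleGraph n).Adj x y) :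
    {z | (cycleGraph n).Adj x z ∧ z ≠ y}.Subsingleton := by
  obtain ⟨k, rfl⟩ : ∃ k, n = k + 2 := ⟨n - 2, by have := Fin.val_ne_iff.mpr hxy.ne; omega⟩
  simp only [← mem_neighborSet, cycleGraph_neighborSet, Set.mem_insert_iff,
    Set.mem_singleton_iff] at hxy ⊢
  rintro z ⟨hz, hzy⟩ z' ⟨hz', hz'y⟩
  rcases hxy with rfl | rfl <;> rcases hz with rfl | rfl <;> rcases hz' with rfl | rfl <;> tauto

open Fin.CommRing in
theorem cycleGraph_nonneighbors_nontrivial {n : ℕ} (hn : 5 ≤ n) (y : Fin n) :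
    {z | z ≠ y ∧ ¬ (cycleGraph n).Adj y z}.Nontrivial := by
  obtain ⟨k, rfl⟩ : ∃ k, n = k + 2 := ⟨n - 2, by omega⟩
  have h₁ : (1 : Fin (k + 2)) ≠ 0 := by simp
  have h₂ : (2 : Fin (k + 2)) ≠ 0 := by simp (disch := omega) [Fin.ext_iff, Nat.mod_eq_of_lt]
  have h₃ : (3 : Fin (k + 2)) ≠ 0 := by simp (disch := omega) [Fin.ext_iff, Nat.mod_eq_of_lt]
  have h₄ : (4 : Fin (k + 2)) ≠ 0 := by simp (disch := omega) [Fin.ext_iff, Nat.mod_eq_of_lt]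
  refine ⟨y + 2, ⟨fun h => h₂ ?_, ?_⟩, y + 3, ⟨fun h => h₃ ?_, ?_⟩, fun h => h₁ ?_⟩
  · linear_combination h
  · rw [cycleGraph_adj]
    rintro (h | h)
    exacts [h₃ (by linear_combination -h), h₁ (by linear_combination h)]
  · linear_combination h
  · rw [cycleGraph_adj]
    rintro (h | h)
    exacts [h₄ (by linear_combination -h), h₂ (by linear_combination h)]
  · linear_combination -h

def cycleGraphRotate (n : ℕ) [NeZero n] : cycleGraph n ≃g cycleGraph n where
  toEquiv := Equiv.addRight 1
  map_rel_iff' := by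
    intro u v
    simp only [Equiv.coe_addRight, cycleGraph_adj', add_sub_add_right_eq_sub]

def cycleMarking (n : ℕ) [NeZero n] : SimpleGraph (Fin n) :=
  edge 0 1 ⊔ edge 1 2 ⊔ edge 3 4

theorem cycleMarking_le {n : ℕ} [NeZero n] (hn : 5 ≤ n) : cycleMarking n ≤ cycleGraph n := by
  simp only [cycleMarking, sup_le_iff, edge_le_iff]
  refine ⟨⟨Or.inr ?_, Or.inr ?_⟩, Or.inr ?_⟩ <;>
    exact pathGraph_le_cycleGraph (pathGraph_adj.mpr (Or.inl (by
      simp (disch := omega) [Nat.mod_eq_of_lt])))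

theorem cycleMarking_adj_val {n : ℕ} [NeZero n] (hn : 5 ≤ n) {x y : Fin n}
    (h : (cycleMarking n).Adj x y) :
    x.val = 0 ∧ y.val = 1 ∨ x.val = 1 ∧ y.val = 0 ∨ x.val = 1 ∧ y.val = 2 ∨
      x.val = 2 ∧ y.val = 1 ∨ x.val = 3 ∧ y.val = 4 ∨ x.val = 4 ∧ y.val = 3 := by
  simp only [cycleMarking, sup_adj, edge_adj, Fin.ext_iff] at h
  simp (disch := omega) only [Fin.coe_ofNat_eq_mod, Nat.mod_eq_of_lt] at h
  omega

theorem cycleGraph_hom_eq_self {n : ℕ} [NeZero n] (hn : 6 ≤ n)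
    (f : cycleGraph n →g cycleGraph n) (hf : Function.Injective f)
    (hK : ∀ x y, (cycleMarking n).Adj x y → (cycleMarking n).Adj (f x) (f y)) :
    ∀ x, f x = x := by
  have hmarked :
      (cycleMarking n).Adj 0 1 ∧ (cycleMarking n).Adj 1 2 ∧ (cycleMarking n).Adj 3 4 := by
    simp (disch := omega) [cycleMarking, edge_adj, Fin.ext_iff, Nat.mod_eq_of_lt]
  have h₀₁ := cycleMarking_adj_val (by omega) (hK _ _ hmarked.1)
  have h₁₂ := cycleMarking_adj_val (by omega) (hK _ _ hmarked.2.1)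
  have h₃₄ := cycleMarking_adj_val (by omega) (hK _ _ hmarked.2.2)
  have distinct (i j : Fin n) (h : i.val ≠ j.val) : (f i).val ≠ (f j).val :=
    Fin.val_ne_iff.mpr (hf.ne (Fin.val_ne_iff.mp h))
  have h₀₂ := distinct 0 2 (by simp (disch := omega) [Nat.mod_eq_of_lt])
  have h₀₃ := distinct 0 3 (by simp (disch := omega) [Nat.mod_eq_of_lt])
  have h₁₃ := distinct 1 3 (by simp (disch := omega) [Nat.mod_eq_of_lt])
  have h₂₃ := distinct 2 3 (by simp (disch := omega) [Nat.mod_eq_of_lt])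
  -- `f` fixes `1`, the only vertex on two marked edges, and permutes `{0, 2}`. Swapping them
  -- would send the neighbour `3` of `2` to `-1`, which lies on no marked edge when `n ≥ 6`.
  have h₃₂ : (cycleGraph n).Adj 3 2 := pathGraph_le_cycleGraph
    (pathGraph_adj.mpr (Or.inr (by simp (disch := omega) [Nat.mod_eq_of_lt])))
  have h₂ := cycleGraph_adj_val (f.map_adj h₃₂) (by omega) (by omega)
  refine hom_eq_self_of_fixes_zero_one pathGraph_le_cycleGraph
    (fun _ _ h => cycleGraph_adj_val h) f hf (Fin.ext ?_) (Fin.ext ?_) <;>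
    simp (disch := omega) only [Fin.coe_ofNat_eq_mod, Nat.mod_eq_of_lt] <;> omega

theorem stmt9 (m n : ℕ) (hm : 2 < m) (hn : 5 < n) :
    distinguishingIndex (lexProd (SimpleGraph.pathGraph m) (SimpleGraph.cycleGraph n)) = 2 := by
  have : NeZero m := ⟨by omega⟩
  have : NeZero n := ⟨by omega⟩
  have h₀₁ : (0 : Fin m) ≠ 1 := by simp (disch := omega) [Fin.ext_iff, Nat.mod_eq_of_lt]
  let K := lexProd ⊥ (cycleMarking n) ⊔ edge ((0 : Fin m), (0 : Fin n)) (1, 0)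
  have hK : K ≤ lexProd (pathGraph m) (cycleGraph n) := by
    refine sup_le (lexProd_mono bot_le (cycleMarking_le (by omega))) ?_
    rw [edge_le_iff]
    exact Or.inr (Or.inl (pathGraph_adj.mpr (Or.inl (by simp (disch := omega) [Nat.mod_eq_of_lt]))))
  have hrigid (σ : lexProd (pathGraph m) (cycleGraph n) ≃g lexProd (pathGraph m) (cycleGraph n))
      (hσ : ∀ u v, K.Adj u v → K.Adj (σ u) (σ v)) : ∀ p, σ p = p :=
    lexProd_aut_eq_self (fun _ _ => cycleGraph_neighbors_ne_subsingleton)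
      (cycleGraph_nonneighbors_nontrivial (by omega)) cycleGraph_preconnected (cycleMarking n)
      h₀₁ 0 (pathGraph_hom_eq_self hm) (cycleGraph_hom_eq_self hn) σ hσ
  have hrotate : lexProdCongrRight (G := pathGraph m) (cycleGraphRotate n) (0, 0) ≠ (0, 0) := by
    simp [lexProdCongrRight, cycleGraphRotate]
    omega
  exact distinguishingIndex_eq_two_of_edge_labeling
    (exists_edge_labeling_of_rigid_subgraph K hK hrigid) _ _ hrotate
end

section
/- Let n ≥ 2 be an integer with n = r^4 for some positive integer r. Then the lexicographic product of the star K_{1,n} with the path P_2 satisfies 2 ≤ D'(K_{1,n}[P_2]) ≤ n^{1/4} + 1, i.e. D'(K_{1,n}[P_2]) ≤ r + 1. -/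
open SimpleGraph

/-!
Swapping two leaves of the star is a nontrivial automorphism, and a labeling with at most one
label is preserved by every automorphism; this gives the lower bound.

For the upper bound, write `(c, a)` for the two copies of the centre and `(i, a)` for those of
leaf `i`, and encode the `r ^ 4` leaves by their four base-`r` digits. The edges `(c, 1)–(i, 1)`
get an extra marker label (`none`), and the other four edges at leaf `i`, namely `(c, 0)–(i, 0)`,
`(c, 0)–(i, 1)`, `(c, 1)–(i, 0)` and `(i, 0)–(i, 1)`, carry its four digits. An automorphism
permutes the two centre copies, the only vertices adjacent to all others. Preserving the marker,
it fixes `(c, 1)` and maps each `(i, 1)` to some `(j, 1)`, hence `(i, 0)` to `(j, 0)`; the digits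
then force `j = i`.
-/

section DistinguishingIndex

variable {V β : Type*} {G : SimpleGraph V}

def IsDistinguishingEdgeLabeling (G : SimpleGraph V) (ψ : G.edgeSet → β) : Prop :=
  ∀ σ : G ≃g G, (∀ e, ψ (σ.mapEdgeSet e) = ψ e) → ∀ v, σ v = v

theorem IsDistinguishingEdgeLabeling.comp_injective {γ : Type*} {ψ : G.edgeSet → β}
    (h : IsDistinguishingEdgeLabeling G ψ) {f : β → γ} (hf : Function.Injective f) :
    IsDistinguishingEdgeLabeling G (f ∘ ψ) :=
  fun σ hσ => h σ fun e => hf (hσ e)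

theorem distinguishingIndex_eq_sInf (G : SimpleGraph V) : distinguishingIndex G =
    sInf {d | ∃ ψ : G.edgeSet → Fin d, IsDistinguishingEdgeLabeling G ψ} :=
  rfl

theorem distinguishingIndex_le_card [Fintype β] {ψ : G.edgeSet → β}
    (h : IsDistinguishingEdgeLabeling G ψ) : distinguishingIndex G ≤ Fintype.card β := by
  rw [distinguishingIndex_eq_sInf]
  exact Nat.sInf_le ⟨_, h.comp_injective (Fintype.equivFin β).injective⟩

theorem two_le_distinguishingIndex [Finite β] {ψ : G.edgeSet → β}
    (h : IsDistinguishingEdgeLabeling G ψ) (σ : G ≃g G) {v : V} (hv : σ v ≠ v) :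
    2 ≤ distinguishingIndex G := by
  have := Fintype.ofFinite β
  obtain ⟨φ, hφ⟩ : ∃ φ : G.edgeSet → Fin (distinguishingIndex G),
      IsDistinguishingEdgeLabeling G φ :=
    Nat.sInf_mem (s := {d | ∃ ψ : G.edgeSet → Fin d, IsDistinguishingEdgeLabeling G ψ})
      ⟨_, _, h.comp_injective (Fintype.equivFin β).injective⟩
  by_contra! hlt
  have : Subsingleton (Fin (distinguishingIndex G)) := Fin.subsingleton_iff_le_one.mpr (by omega)
  exact hv (hφ σ (fun _ => Subsingleton.elim _ _) v)

theorem isDistinguishingEdgeLabeling_lift {f : V → V → β} (hf : ∀ u v, f u v = f v u)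
    (h : ∀ σ : G ≃g G, (∀ u v, G.Adj u v → f (σ u) (σ v) = f u v) → ∀ v, σ v = v) :
    IsDistinguishingEdgeLabeling G (fun e => Sym2.lift ⟨f, hf⟩ e.1) :=
  fun σ hσ => h σ fun u v huv => by simpa using hσ ⟨s(u, v), huv⟩

end DistinguishingIndex

namespace SimpleGraph.Iso

variable {V V' W : Type*} {G : SimpleGraph V} {G' : SimpleGraph V'}

def lexProdLeft (α : G ≃g G') (H : SimpleGraph W) : lexProd G H ≃g lexProd G' H where
  toEquiv := α.toEquiv.prodCongr (Equiv.refl W)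
  map_rel_iff' := by simp [lexProd, Iso.map_adj_iff]

theorem lexProdLeft_apply (α : G ≃g G') (H : SimpleGraph W) (p : V × W) :
    α.lexProdLeft H p = (α p.1, p.2) :=
  rfl

theorem adj_of_forall_ne_adj (σ : G ≃g G') {v : V} (hv : ∀ w ≠ v, G.Adj v w) :
    ∀ w ≠ σ v, G'.Adj (σ v) w := by
  intro w hw
  rw [← σ.apply_symm_apply w]
  exact σ.map_adj_iff.mpr (hv _ fun h => hw (by rw [← h, σ.apply_symm_apply]))

end SimpleGraph.Iso

abbrev starLexP2 (L : Type*) : SimpleGraph ((Fin 1 ⊕ L) × Fin 2) :=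
  lexProd (completeBipartiteGraph (Fin 1) L) (pathGraph 2)

namespace starLexP2

variable {L α : Type*}

theorem adj_inl_inr (c : Fin 1) (i : L) (a b : Fin 2) :
    (starLexP2 L).Adj (.inl c, a) (.inr i, b) :=
  .inl (by simp)

theorem adj_inr_inr {i j : L} {a b : Fin 2} :
    (starLexP2 L).Adj (.inr i, a) (.inr j, b) ↔ i = j ∧ a ≠ b := by
  simp [lexProd, pathGraph_adj]
  omega

theorem adj_inr_zero_inr_one (i : L) : (starLexP2 L).Adj (.inr i, 0) (.inr i, 1) :=
  adj_inr_inr.mpr ⟨rfl, zero_ne_one⟩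

theorem forall_ne_adj_iff [Nontrivial L] {v : (Fin 1 ⊕ L) × Fin 2} :
    (∀ w ≠ v, (starLexP2 L).Adj v w) ↔ v.1.isLeft := by
  rcases v with ⟨c | i, a⟩
  · simp only [Sum.isLeft_inl, iff_true]
    rintro ⟨d | j, b⟩ hne
    · obtain rfl := Subsingleton.elim c d
      refine .inr ⟨rfl, ?_⟩
      simp_all [pathGraph_adj]
      omega
    · exact adj_inl_inr c j a b
  · simp only [Sum.isLeft_inr, Bool.false_eq_true, iff_false, not_forall]
    obtain ⟨j, hj⟩ := exists_ne i
    exact ⟨(.inr j, a), by simpa using hj, fun h => hj (adj_inr_inr.mp h).1.symm⟩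

theorem isLeft_map [Nontrivial L] (σ : starLexP2 L ≃g starLexP2 L) (v : (Fin 1 ⊕ L) × Fin 2) :
    (σ v).1.isLeft = v.1.isLeft := by
  have h (τ : starLexP2 L ≃g starLexP2 L) v : v.1.isLeft → (τ v).1.isLeft := fun hv =>
    forall_ne_adj_iff.mp (τ.adj_of_forall_ne_adj (forall_ne_adj_iff.mpr hv))
  exact Bool.eq_iff_iff.mpr ⟨fun hσv => by simpa using h σ.symm _ hσv, h σ v⟩

def label [DecidableEq L] (code : L → Fin 4 → α) :
    (Fin 1 ⊕ L) × Fin 2 → (Fin 1 ⊕ L) × Fin 2 → Option α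
  | (.inl _, a), (.inr i, b) | (.inr i, b), (.inl _, a) =>
    !![some (code i 0), some (code i 1); some (code i 2), none] a b
  | (.inr i, _), (.inr j, _) => if i = j then some (code i 3) else none
  | (.inl _, _), (.inl _, _) => none

theorem label_comm [DecidableEq L] (code : L → Fin 4 → α) (u v : (Fin 1 ⊕ L) × Fin 2) :
    label code u v = label code v u := by
  rcases u with ⟨_ | i, a⟩ <;> rcases v with ⟨_ | j, b⟩ <;> simp only [label]
  by_cases h : i = j
  · simp [h]
  · simp [h, Ne.symm h]

theorem label_inl_inr_eq_none_iff [DecidableEq L] (code : L → Fin 4 → α) (c : Fin 1) (i : L)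
    (a b : Fin 2) :
    label code (.inl c, a) (.inr i, b) = none ↔ a = 1 ∧ b = 1 := by
  fin_cases a <;> fin_cases b <;> simp [label]

theorem exists_map_inl [Nontrivial L] (σ : starLexP2 L ≃g starLexP2 L) (a : Fin 2) :
    ∃ b, σ (.inl 0, a) = (.inl 0, b) := by
  have := isLeft_map σ (.inl 0, a)
  rcases h : σ (.inl 0, a) with ⟨c | _, b⟩
  · exact ⟨b, by rw [Subsingleton.elim c 0]⟩
  · simp [h] at this

theorem exists_map_inr [Nontrivial L] (σ : starLexP2 L ≃g starLexP2 L) (i : L) (a : Fin 2) :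
    ∃ j b, σ (.inr i, a) = (.inr j, b) := by
  have := isLeft_map σ (.inr i, a)
  rcases h : σ (.inr i, a) with ⟨_ | j, b⟩
  · simp [h] at this
  · exact ⟨j, b, rfl⟩

theorem map_inr_zero [Nontrivial L] (σ : starLexP2 L ≃g starLexP2 L) {i j : L}
    (hj : σ (.inr i, 1) = (.inr j, 1)) : σ (.inr i, 0) = (.inr j, 0) := by
  obtain ⟨k, b, hk⟩ := exists_map_inr σ i 0
  have hadj := σ.map_adj_iff.mpr (adj_inr_zero_inr_one i)
  rw [hk, hj, adj_inr_inr] at hadj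
  obtain ⟨rfl, hb⟩ := hadj
  rw [hk]
  fin_cases b
  · rfl
  · exact absurd rfl hb

section LabelPreserving

variable [DecidableEq L] [Nontrivial L] {code : L → Fin 4 → α}
  {σ : starLexP2 L ≃g starLexP2 L}
  (hσ : ∀ u v, (starLexP2 L).Adj u v → label code (σ u) (σ v) = label code u v)
include hσ

theorem map_inl_one : σ (.inl 0, 1) = (.inl 0, 1) := by
  obtain ⟨i⟩ := (inferInstance : Nonempty L)
  obtain ⟨b, hb⟩ := exists_map_inl σ 1
  obtain ⟨j, b', hj⟩ := exists_map_inr σ i 1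
  have hmarker := hσ _ _ (adj_inl_inr 0 i 1 1)
  rw [hb, hj, (label_inl_inr_eq_none_iff code 0 i 1 1).mpr ⟨rfl, rfl⟩,
    label_inl_inr_eq_none_iff] at hmarker
  rw [hb, hmarker.1]

theorem map_inl_zero : σ (.inl 0, 0) = (.inl 0, 0) := by
  obtain ⟨b, hb⟩ := exists_map_inl σ 0
  rw [hb]
  fin_cases b
  · rfl
  · simpa using σ.injective (hb.trans (map_inl_one hσ).symm)

theorem exists_map_inr_one (i : L) : ∃ j, σ (.inr i, 1) = (.inr j, 1) := by
  obtain ⟨j, b, hj⟩ := exists_map_inr σ i 1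
  have hmarker := hσ _ _ (adj_inl_inr 0 i 1 1)
  rw [map_inl_one hσ, hj, (label_inl_inr_eq_none_iff code 0 i 1 1).mpr ⟨rfl, rfl⟩,
    label_inl_inr_eq_none_iff] at hmarker
  exact ⟨j, by rw [hj, hmarker.2]⟩

theorem code_eq_of_map_inr {i j : L} (hj : σ (.inr i, 1) = (.inr j, 1)) : code j = code i := by
  have h00 := hσ _ _ (adj_inl_inr 0 i 0 0)
  have h01 := hσ _ _ (adj_inl_inr 0 i 0 1)
  have h10 := hσ _ _ (adj_inl_inr 0 i 1 0)
  have h3 := hσ _ _ (adj_inr_zero_inr_one i)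
  rw [map_inl_zero hσ, map_inl_one hσ, map_inr_zero σ hj, hj] at *
  funext k
  fin_cases k <;> simp_all [label]

end LabelPreserving

theorem isDistinguishingEdgeLabeling_label [DecidableEq L] [Nontrivial L]
    {code : L → Fin 4 → α} (hcode : Function.Injective code) :
    IsDistinguishingEdgeLabeling (starLexP2 L)
      (fun e => Sym2.lift ⟨label code, label_comm code⟩ e.1) := by
  refine isDistinguishingEdgeLabeling_lift _ fun σ hσ => ?_
  have hleaf (i : L) (a : Fin 2) : σ (.inr i, a) = (.inr i, a) := by
    obtain ⟨j, hj⟩ := exists_map_inr_one hσ i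
    obtain rfl := hcode (code_eq_of_map_inr hσ hj)
    fin_cases a
    · exact map_inr_zero σ hj
    · exact hj
  rintro ⟨c | i, a⟩
  · obtain rfl := Subsingleton.elim c 0
    fin_cases a
    · exact map_inl_zero hσ
    · exact map_inl_one hσ
  · exact hleaf i a

theorem exists_map_ne [Nontrivial L] :
    ∃ (σ : starLexP2 L ≃g starLexP2 L) (v : (Fin 1 ⊕ L) × Fin 2), σ v ≠ v := by
  classical
  obtain ⟨i, j, hij⟩ := exists_pair_ne L
  refine ⟨(completeBipartiteGraphCongr (.refl _) (.swap i j)).lexProdLeft _, (.inr i, 0), ?_⟩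
  simpa [Iso.lexProdLeft_apply] using hij.symm

end starLexP2

theorem stmt13_general (n r : ℕ) (hn : 2 ≤ n) (h : n = r ^ 4) :
    2 ≤ distinguishingIndex
        (lexProd (completeBipartiteGraph (Fin 1) (Fin n)) (SimpleGraph.pathGraph 2)) ∧
    distinguishingIndex
        (lexProd (completeBipartiteGraph (Fin 1) (Fin n)) (SimpleGraph.pathGraph 2)) ≤
      r + 1 := by
  subst h
  have : Nontrivial (Fin (r ^ 4)) := Fin.nontrivial_iff_two_le.mpr hn
  have hψ := starLexP2.isDistinguishingEdgeLabeling_label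
    (finFunctionFinEquiv (m := r) (n := 4)).symm.injective
  obtain ⟨σ, v, hv⟩ := starLexP2.exists_map_ne (L := Fin (r ^ 4))
  exact ⟨two_le_distinguishingIndex hψ σ hv, by simpa using distinguishingIndex_le_card hψ⟩

theorem stmt13 (n r : ℕ) (hn : 2 ≤ n) (hr : 1 ≤ r) (h : n = r ^ 4) :
    2 ≤ distinguishingIndex
        (lexProd (completeBipartiteGraph (Fin 1) (Fin n)) (SimpleGraph.pathGraph 2)) ∧
    distinguishingIndex
        (lexProd (completeBipartiteGraph (Fin 1) (Fin n)) (SimpleGraph.pathGraph 2)) ≤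
      r + 1 :=
  stmt13_general n r hn h
end

section
/- Let G be a connected simple graph such that every automorphism of G[G] is of wreath form. Then D'(G[G]) ≤ 2. -/
open SimpleGraph

/-!
Fix linear orders on the vertex sets. Inside the fibre over `g`, label an edge `(g, x)(g, y)` by `1`
iff `xy` belongs to a set `S g` of edges of `H`, where the sizes `#(S g)` are pairwise distinct;
this is possible since a connected graph on `n` vertices has at least `n - 1` edges. Between
fibres `g < g'`, label `(g, x)(g', y)` by `1` iff `y ≤ x`.

A label-preserving automorphism `(α, β)` of wreath form carries `S g` bijectively onto `S (α g)`,
so `α = id`. Then for adjacent `g < g'` the bijection `β g'` carries `{y | y ≤ x}` onto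
`{y | y ≤ β g x}`, and counting gives `β g x = x` (dually when `g' < g`).
-/

theorem Equiv.eq_of_forall_apply_le_iff {α : Type*} [Fintype α] [LinearOrder α] (τ : α ≃ α)
    {a b : α} (h : ∀ y, τ y ≤ a ↔ y ≤ b) : a = b := by
  classical
  have hmono : StrictMono fun c : α => (Finset.univ.filter (· ≤ c)).card := fun c d hcd =>
    Finset.card_lt_card <| (Finset.ssubset_iff_of_subset fun y hy => by
      simp only [Finset.mem_filter, Finset.mem_univ, true_and] at hy ⊢
      exact hy.trans hcd.le).2 ⟨d, by simp, by simpa using hcd⟩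
  exact hmono.injective (Finset.card_equiv τ fun y => by simp [h]).symm

theorem Equiv.eq_of_forall_le_apply_iff {α : Type*} [Fintype α] [LinearOrder α] (τ : α ≃ α)
    {a b : α} (h : ∀ y, a ≤ τ y ↔ b ≤ y) : a = b :=
  Equiv.eq_of_forall_apply_le_iff (α := αᵒᵈ) τ h

theorem Finset.exists_card_injective_of_card_le_card_add_one {α β : Type*} [Finite α]
    [Fintype β] (h : Nat.card α ≤ Nat.card β + 1) :
    ∃ S : α → Finset β, Function.Injective fun a => (S a).card := by
  obtain ⟨n, ⟨e⟩⟩ := Finite.exists_equiv_fin α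
  have hn : n ≤ (Finset.univ : Finset β).card + 1 := by
    simpa [Nat.card_congr e] using h
  choose S _ hS using fun a => Finset.exists_subset_card_eq (s := Finset.univ)
    (by have := (e a).isLt; omega : (e a : ℕ) ≤ _)
  exact ⟨S, fun a b hab => e.injective (Fin.ext (by simpa [hS] using hab))⟩

theorem distinguishingIndex_le_two_of_symmetric {X : Type*} (H : SimpleGraph X)
    {r : X → X → Prop} (hr : Std.Symm r)
    (h : ∀ σ : H ≃g H, (∀ p q, H.Adj p q → (r (σ p) (σ q) ↔ r p q)) → ∀ v, σ v = v) :
    distinguishingIndex H ≤ 2 := by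
  classical
  refine Nat.sInf_le ⟨fun e => Sym2.lift ⟨fun p q => if r p q then 1 else 0,
    fun p q => by simp only [hr.iff p q]⟩ e.1, fun σ hσ => h σ fun p q hpq => ?_⟩
  have : (if r (σ p) (σ q) then (1 : Fin 2) else 0) = if r p q then 1 else 0 :=
    hσ ⟨s(p, q), hpq⟩
  split_ifs at this with hσpq hpq' hpq'
  · exact iff_of_true hσpq hpq'
  · exact absurd this one_ne_zero
  · exact absurd this zero_ne_one
  · exact iff_of_false hσpq hpq'

section

variable {V W : Type*} [LinearOrder V] [LinearOrder W] (H : SimpleGraph W)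
  (S : V → Finset H.edgeSet)

def lexProdLabel (p q : V × W) : Prop :=
  (p.1 = q.1 ∧ ∃ h : H.Adj p.2 q.2, ⟨s(p.2, q.2), h⟩ ∈ S p.1) ∨
    (p.1 < q.1 ∧ q.2 ≤ p.2) ∨ (q.1 < p.1 ∧ p.2 ≤ q.2)

theorem lexProdLabel_symm : Std.Symm (lexProdLabel H S) := by
  refine ⟨?_⟩
  rintro p q (⟨h1, h, hS⟩ | h | h)
  · refine Or.inl ⟨h1.symm, h.symm, ?_⟩
    simpa only [← h1, Sym2.eq_swap] using hS
  · exact Or.inr (Or.inr h)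
  · exact Or.inr (Or.inl h)

theorem lexProdLabel_fiber_iff (g : V) {x y : W} (h : H.Adj x y) :
    lexProdLabel H S (g, x) (g, y) ↔ ⟨s(x, y), h⟩ ∈ S g := by
  simp only [lexProdLabel, lt_self_iff_false, false_and, or_false, true_and, exists_prop_of_true h]

theorem lexProdLabel_of_lt {g g' : V} (hg : g < g') (x y : W) :
    lexProdLabel H S (g, x) (g', y) ↔ y ≤ x := by
  simp only [lexProdLabel, hg.ne, hg, hg.not_gt, false_and, true_and, false_or, or_false]

theorem lexProdLabel_of_gt {g g' : V} (hg : g' < g) (x y : W) :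
    lexProdLabel H S (g, x) (g', y) ↔ x ≤ y := by
  simp only [lexProdLabel, hg.ne', hg, hg.not_gt, false_and, true_and, false_or]

end

section

variable {V W : Type*} [LinearOrder V] [LinearOrder W] {G : SimpleGraph V} {H : SimpleGraph W}
  {S : V → Finset H.edgeSet} {σ : lexProd G H ≃g lexProd G H} {α : G ≃g G} {β : V → H ≃g H}

theorem base_eq_self_of_preserves_lexProdLabel
    (hS : Function.Injective fun g => (S g).card)
    (hσ : ∀ p, σ p = (α p.1, β (α p.1) p.2))
    (hr : ∀ p q, (lexProd G H).Adj p q →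
      (lexProdLabel H S (σ p) (σ q) ↔ lexProdLabel H S p q))
    (g : V) : α g = g := by
  refine hS (Finset.card_equiv (β (α g)).mapEdgeSet fun ε => ?_).symm
  obtain ⟨e, he⟩ := ε
  induction e using Sym2.ind with
  | _ x y =>
    have := hr (g, x) (g, y) (Or.inr ⟨rfl, he⟩)
    rw [hσ, hσ, lexProdLabel_fiber_iff H S _ he,
      lexProdLabel_fiber_iff H S _ ((β (α g)).map_adj_iff.2 he)] at this
    exact this.symm

theorem fiber_eq_self_of_preserves_lexProdLabel [Fintype W]
    (hσ : ∀ p, σ p = (α p.1, β (α p.1) p.2))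
    (hr : ∀ p q, (lexProd G H).Adj p q →
      (lexProdLabel H S (σ p) (σ q) ↔ lexProdLabel H S p q))
    (hα : ∀ g, α g = g) {g g' : V} (hg : G.Adj g g') (x : W) : β g x = x := by
  have hcross : ∀ y, lexProdLabel H S (g, β g x) (g', β g' y) ↔ lexProdLabel H S (g, x) (g', y) :=
    fun y => by simpa only [hσ, hα] using hr (g, x) (g', y) (Or.inl hg)
  rcases hg.ne.lt_or_gt with hlt | hgt
  · exact (β g').toEquiv.eq_of_forall_apply_le_iff fun y => by
      simpa only [RelIso.coe_fn_toEquiv, lexProdLabel_of_lt H S hlt] using hcross y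
  · exact (β g').toEquiv.eq_of_forall_le_apply_iff fun y => by
      simpa only [RelIso.coe_fn_toEquiv, lexProdLabel_of_gt H S hgt] using hcross y

theorem eq_self_of_preserves_lexProdLabel [Fintype W]
    (hS : Function.Injective fun g => (S g).card) (hG : ∀ g, ∃ g', G.Adj g g')
    (hσ : ∀ p, σ p = (α p.1, β (α p.1) p.2))
    (hr : ∀ p q, (lexProd G H).Adj p q →
      (lexProdLabel H S (σ p) (σ q) ↔ lexProdLabel H S p q))
    (p : V × W) : σ p = p := by
  have hα := base_eq_self_of_preserves_lexProdLabel hS hσ hr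
  obtain ⟨g', hg'⟩ := hG p.1
  rw [hσ, hα, fiber_eq_self_of_preserves_lexProdLabel hσ hr hα hg']

end

theorem distinguishingIndex_lexProd_le_two {V W : Type*} [Finite V] [Finite W]
    {G : SimpleGraph V} {H : SimpleGraph W} (hG : ∀ g, ∃ g', G.Adj g g')
    (hcard : Nat.card V ≤ Nat.card H.edgeSet + 1) (hw : wreathForm G H) :
    distinguishingIndex (lexProd G H) ≤ 2 := by
  classical
  have := Fintype.ofFinite V
  have := Fintype.ofFinite W
  let _ : LinearOrder V := LinearOrder.lift' _ (Fintype.equivFin V).injective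
  let _ : LinearOrder W := LinearOrder.lift' _ (Fintype.equivFin W).injective
  obtain ⟨S, hS⟩ := Finset.exists_card_injective_of_card_le_card_add_one hcard
  refine distinguishingIndex_le_two_of_symmetric _ (lexProdLabel_symm H S) fun σ hr => ?_
  obtain ⟨α, β, hσ⟩ := hw σ
  exact eq_self_of_preserves_lexProdLabel hS hG hσ hr

theorem stmt17 {V : Type*} [Fintype V] (G : SimpleGraph V)
    (hG : G.Connected) (hw : wreathForm G G) :
    distinguishingIndex (lexProd G G) ≤ 2 := by
  rcases subsingleton_or_nontrivial V with _ | _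
  · exact Nat.sInf_le ⟨fun _ => 0, fun _ _ _ => Subsingleton.elim _ _⟩
  · exact distinguishingIndex_lexProd_le_two hG.preconnected.exists_adj_of_nontrivial
      hG.card_vert_le_card_edgeSet_add_one hw
end
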